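/- Let π be a prior on labels with support S, let p be a fully supported probability vector, and q(ℓ) = p(ℓ)π(ℓ)/Σ_{ℓ'}p(ℓ')π(ℓ'). Then q equals the conditional distribution of the tilted distribution p·π restricted to S, and KL(q ‖ p) ≤ −log(Σ_{ℓ∈S} p(ℓ)) + log(max_{ℓ∈S} π(ℓ) / min_{ℓ∈S} π(ℓ)). -/

import Mathlib

/-! On the support `S` of `π` the likelihood ratio is `q / p = π / Z` with `Z = ∑_{ℓ∈S} p ℓ π ℓ`,
so it is at most `max_S π / Z`, and averaging `log (q / p)` against the probability vector `q`
gives `KL(q‖p) ≤ log (max_S π / Z)`. Finally `Z ≥ p(S) · min_S π`. -/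

open Finset Real

section
variable {ι : Type*}

theorem sum_mul_log_div_le_log {s : Finset ι} {q p : ι → ℝ} {c : ℝ}
    (hq : ∀ l ∈ s, 0 ≤ q l) (hp : ∀ l ∈ s, 0 < p l) (hq1 : ∑ l ∈ s, q l = 1)
    (hc : ∀ l ∈ s, q l / p l ≤ c) :
    ∑ l ∈ s, q l * log (q l / p l) ≤ log c :=
  calc ∑ l ∈ s, q l * log (q l / p l)
      ≤ ∑ l ∈ s, q l * log c := sum_le_sum fun l hl => by
        rcases (hq l hl).eq_or_lt with h | h
        · simp [← h]
        · exact mul_le_mul_of_nonneg_left (log_le_log (div_pos h (hp l hl)) (hc l hl)) h.le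
    _ = log c := by rw [← sum_mul, hq1, one_mul]

theorem log_sup'_div_sum_mul_le {s : Finset ι} (hs : s.Nonempty) {p w : ι → ℝ}
    (hp : ∀ l ∈ s, 0 < p l) (hw : ∀ l ∈ s, 0 < w l) :
    log (s.sup' hs w / ∑ l ∈ s, p l * w l) ≤
      -log (∑ l ∈ s, p l) + log (s.sup' hs w / s.inf' hs w) := by
  obtain ⟨l₀, hl₀⟩ := hs
  have hmass : 0 < ∑ l ∈ s, p l := sum_pos hp ⟨l₀, hl₀⟩
  have hinf : 0 < s.inf' ⟨l₀, hl₀⟩ w := (lt_inf'_iff _).mpr hw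
  have hsup : 0 < s.sup' ⟨l₀, hl₀⟩ w := (hw l₀ hl₀).trans_le (le_sup' w hl₀)
  have hZ : (∑ l ∈ s, p l) * s.inf' ⟨l₀, hl₀⟩ w ≤ ∑ l ∈ s, p l * w l := by
    rw [sum_mul]
    exact sum_le_sum fun l hl => mul_le_mul_of_nonneg_left (inf'_le w hl) (hp l hl).le
  calc log (s.sup' _ w / ∑ l ∈ s, p l * w l)
      ≤ log (s.sup' _ w / ((∑ l ∈ s, p l) * s.inf' _ w)) :=
        log_le_log (div_pos hsup ((mul_pos hmass hinf).trans_le hZ))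
          (div_le_div_of_nonneg_left hsup.le (mul_pos hmass hinf) hZ)
    _ = -log (∑ l ∈ s, p l) + log (s.sup' _ w / s.inf' _ w) := by
        rw [div_mul_eq_div_div_swap, log_div (div_pos hsup hinf).ne' hmass.ne']
        ring

theorem sum_tilted_mul_log_div_le {s : Finset ι} (hs : s.Nonempty) {p w : ι → ℝ}
    (hp : ∀ l ∈ s, 0 < p l) (hw : ∀ l ∈ s, 0 < w l) :
    ∑ l ∈ s, p l * w l / (∑ l' ∈ s, p l' * w l') *
        log (p l * w l / (∑ l' ∈ s, p l' * w l') / p l) ≤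
      -log (∑ l ∈ s, p l) + log (s.sup' hs w / s.inf' hs w) := by
  have hZ : 0 < ∑ l ∈ s, p l * w l := sum_pos (fun l hl => mul_pos (hp l hl) (hw l hl)) hs
  refine (sum_mul_log_div_le_log (fun l hl => ?_) hp ?_ (fun l hl => ?_)).trans
    (log_sup'_div_sum_mul_le hs hp hw)
  · exact (div_pos (mul_pos (hp l hl) (hw l hl)) hZ).le
  · rw [← sum_div, div_self hZ.ne']
  · rw [div_right_comm, mul_div_cancel_left₀ _ (hp l hl).ne']
    exact div_le_div_of_nonneg_right (le_sup' w hl) hZ.le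

end

theorem posterior_kl_bound_general (ι : Type) [Fintype ι] [DecidableEq ι] (p pr : ι → ℝ)
    (hp : ∀ l, 0 < p l) (hpr : ∀ l, 0 ≤ pr l)
    (S : Finset ι) (hS : S = Finset.univ.filter fun l => 0 < pr l) (hSne : S.Nonempty) :
    let q : ι → ℝ := fun l => p l * pr l / ∑ l', p l' * pr l'
    (∀ l, q l = if l ∈ S then p l * pr l / ∑ l' ∈ S, p l' * pr l' else 0) ∧
    (∑ l, q l * Real.log (q l / p l)) ≤
      -Real.log (∑ l ∈ S, p l) + Real.log ((S.sup' hSne pr) / (S.inf' hSne pr)) := by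
  intro q
  have hpos : ∀ l ∈ S, 0 < pr l := fun l hl => by simpa [hS] using hl
  have hoff : ∀ l ∉ S, pr l = 0 := fun l hl => le_antisymm (by simpa [hS] using hl) (hpr l)
  have hZ : ∑ l, p l * pr l = ∑ l ∈ S, p l * pr l :=
    (sum_subset (subset_univ S) fun l _ hl => by simp [hoff l hl]).symm
  have hq : ∀ l, q l = if l ∈ S then p l * pr l / ∑ l' ∈ S, p l' * pr l' else 0 := fun l => by
    split_ifs with hl
    · simp only [q, hZ]
    · simp [q, hoff l hl]
  refine ⟨hq, ?_⟩
  calc ∑ l, q l * log (q l / p l)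
      = ∑ l ∈ S, q l * log (q l / p l) :=
        (sum_subset (subset_univ S) fun l _ hl => by simp [hq l, hl]).symm
    _ = ∑ l ∈ S, p l * pr l / (∑ l' ∈ S, p l' * pr l') *
          log (p l * pr l / (∑ l' ∈ S, p l' * pr l') / p l) :=
        sum_congr rfl fun l hl => by rw [hq l, if_pos hl]
    _ ≤ _ := sum_tilted_mul_log_div_le hSne (fun l _ => hp l) hpos

/-- The posterior `q(ℓ) = p(ℓ)π(ℓ)/∑ p π` is the conditional of the tilted distribution
`p·π` restricted to the support `S` of `π`, and its KL divergence to `p` is bounded by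
`-log (∑_{ℓ∈S} p ℓ) + log (max_S π / min_S π)`. -/
theorem posterior_kl_bound (ι : Type) [Fintype ι] [DecidableEq ι] (p pr : ι → ℝ)
    (hp : ∀ l, 0 < p l) (hps : ∑ l, p l = 1) (hpr : ∀ l, 0 ≤ pr l)
    (S : Finset ι) (hS : S = Finset.univ.filter fun l => 0 < pr l) (hSne : S.Nonempty) :
    let q : ι → ℝ := fun l => p l * pr l / ∑ l', p l' * pr l'
    (∀ l, q l = if l ∈ S then p l * pr l / ∑ l' ∈ S, p l' * pr l' else 0) ∧
    (∑ l, q l * Real.log (q l / p l)) ≤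
      -Real.log (∑ l ∈ S, p l) + Real.log ((S.sup' hSne pr) / (S.inf' hSne pr)) :=
  posterior_kl_bound_general ι p pr hp hpr S hS hSne
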